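/- arXiv:1007.1568 — 3 statements merged into one kernel-verified Lean document; each statement's English description precedes it below -/
import Mathlib

section
/- For every p ∈ ℕ, the distribution x₊^{−p−1} defined as ((−1)^p/p!)·∂^{p+1} ln x₊ + ((−1)^p κ_p/p!)·δ^{(p)}, where κ_p = Σ_{k=1}^p 1/k, satisfies the functional equation: for every test function ψ, ⟨x₊^{−p−1}, ψ⟩ = lim_{a→−p−1} ( ⟨x₊^a, ψ⟩ − ψ^{(p)}(0)/(p!(a+p+1)) ). -/
open MeasureTheory Filter Topology

noncomputable section

/-- `κ_p = Σ_{k=1}^p 1/k` (so `κ_0 = 0`). -/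
def kappa (p : ℕ) : ℝ := ∑ k ∈ Finset.Icc 1 p, (1 : ℝ) / k

/-- The pairing `⟨x₊^a, ψ⟩` for `a > -p-2`, `a` not a negative integer, defined via the
distributional derivative formula `x₊^a = ∂^{p+1} x₊^{a+p+1} / ((a+1)⋯(a+p+1))`:
`⟨x₊^a, ψ⟩ = (-1)^{p+1} / ((a+1)⋯(a+p+1)) ∫_0^∞ x^{a+p+1} ψ^{(p+1)}(x) dx`. -/
def xPlusPow (p : ℕ) (a : ℝ) (ψ : ℝ → ℝ) : ℝ :=
  ((-1 : ℝ) ^ (p + 1) / ∏ k ∈ Finset.Icc 1 (p + 1), (a + k)) *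
    ∫ x in Set.Ioi (0 : ℝ), x ^ (a + p + 1) * iteratedDeriv (p + 1) ψ x

/-- The pairing `⟨x₊^{-p-1}, ψ⟩` for the distribution
`x₊^{-p-1} = ((-1)^p/p!) ∂^{p+1} ln x₊ + ((-1)^p κ_p/p!) δ^{(p)}`, i.e.
`⟨x₊^{-p-1}, ψ⟩ = (-1/p!) ∫_0^∞ ln x · ψ^{(p+1)}(x) dx + (κ_p/p!) ψ^{(p)}(0)`. -/
def xPlusNegInt (p : ℕ) (ψ : ℝ → ℝ) : ℝ :=
  (-1 / p.factorial) * (∫ x in Set.Ioi (0 : ℝ), Real.log x * iteratedDeriv (p + 1) ψ x)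
    + (kappa p / p.factorial) * iteratedDeriv p ψ 0

namespace XPlusAux

lemma contDiff_iter (n : ℕ) {ψ : ℝ → ℝ} (hψ : ContDiff ℝ (⊤ : ℕ∞) ψ) :
    ContDiff ℝ (((⊤:ℕ∞) : WithTop ℕ∞)) (iteratedDeriv n ψ) := by
  rw [iteratedDeriv_eq_iterate]
  exact (hψ.of_le (by simp)).iterate_deriv n

lemma hcs_iter (n : ℕ) {ψ : ℝ → ℝ} (hψc : HasCompactSupport ψ) :
    HasCompactSupport (iteratedDeriv n ψ) := by
  induction n with
  | zero => simpa using hψc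
  | succ n ih => rw [iteratedDeriv_succ]; exact ih.deriv

lemma sum_Icc_reflect (p : ℕ) (f : ℝ → ℝ) :
    ∑ k ∈ Finset.Icc 1 p, f ((k : ℝ) - p - 1) = ∑ k ∈ Finset.Icc 1 p, f (-(k : ℝ)) := by
  rw [← Finset.Ico_add_one_right_eq_Icc, Finset.sum_Ico_eq_sum_range, Finset.sum_Ico_eq_sum_range]
  rw [← Finset.sum_range_reflect]
  refine Finset.sum_congr rfl fun i hi => ?_
  rw [Finset.mem_range] at hi
  congr 1
  have hi' : i < p := by omega
  have h1 : (1 + (p + 1 - 1 - 1 - i) : ℕ) = p - i := by omega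
  rw [h1, Nat.cast_sub hi'.le]
  push_cast
  ring

lemma prod_Icc_reflect (p : ℕ) (f : ℝ → ℝ) :
    ∏ k ∈ Finset.Icc 1 p, f ((k : ℝ) - p - 1) = ∏ k ∈ Finset.Icc 1 p, f (-(k : ℝ)) := by
  rw [← Finset.Ico_add_one_right_eq_Icc, Finset.prod_Ico_eq_prod_range, Finset.prod_Ico_eq_prod_range]
  rw [← Finset.prod_range_reflect]
  refine Finset.prod_congr rfl fun i hi => ?_
  rw [Finset.mem_range] at hi
  congr 1
  have hi' : i < p := by omega
  have h1 : (1 + (p + 1 - 1 - 1 - i) : ℕ) = p - i := by omega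
  rw [h1, Nat.cast_sub hi'.le]
  push_cast
  ring

lemma prod_shift (p : ℕ) :
    ∏ k ∈ Finset.Icc 1 p, ((k : ℝ) - p - 1) = (-1) ^ p * p.factorial := by
  have := prod_Icc_reflect p id
  simp only [id] at this
  rw [this]
  have h2 : ∀ k ∈ Finset.Icc 1 p, -((k:ℕ) : ℝ) = (-1) * ((k:ℕ):ℝ) := by intros; ring
  rw [Finset.prod_congr rfl h2, Finset.prod_mul_distrib, Finset.prod_const, Nat.card_Icc]
  congr 1
  rw [← Nat.cast_prod]
  congr 1
  rw [← Finset.Ico_add_one_right_eq_Icc]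
  exact Finset.prod_Ico_id_eq_factorial p

lemma sum_inv_shift (p : ℕ) :
    ∑ k ∈ Finset.Icc 1 p, 1 / ((k : ℝ) - p - 1) = -(∑ k ∈ Finset.Icc 1 p, (1:ℝ) / k) := by
  have := sum_Icc_reflect p (fun x => 1 / x)
  rw [this, ← Finset.sum_neg_distrib]
  refine Finset.sum_congr rfl fun k _ => ?_
  rw [div_neg]

lemma integral_Ioi_iter (p : ℕ) {ψ : ℝ → ℝ} (hψ : ContDiff ℝ (⊤ : ℕ∞) ψ)
    (hψc : HasCompactSupport ψ) :
    ∫ x in Set.Ioi (0:ℝ), iteratedDeriv (p+1) ψ x = -(iteratedDeriv p ψ 0) := by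
  have hsm := contDiff_iter p hψ
  have hsm' := contDiff_iter (p+1) hψ
  have hcs := hcs_iter p hψc
  have hderiv : ∀ x ∈ Set.Ioi (0:ℝ),
      HasDerivAt (iteratedDeriv p ψ) (iteratedDeriv (p+1) ψ x) x := by
    intro x _
    rw [iteratedDeriv_succ]
    exact ((hsm.differentiable (by simp)) x).hasDerivAt
  have hzero : (iteratedDeriv p ψ) =ᶠ[atTop] (fun _ => (0:ℝ)) := by
    obtain ⟨r, hr⟩ := (Metric.isBounded_iff_subset_closedBall 0).mp hcs.isBounded
    filter_upwards [eventually_gt_atTop r] with x hx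
    apply image_eq_zero_of_notMem_tsupport
    intro hmem
    have := hr hmem
    rw [Metric.mem_closedBall, Real.dist_eq, sub_zero] at this
    exact absurd (le_trans (le_abs_self x) this) hx.not_ge
  have htend : Tendsto (iteratedDeriv p ψ) atTop (𝓝 0) :=
    (Filter.tendsto_congr' hzero).mpr tendsto_const_nhds
  have hint : IntegrableOn (iteratedDeriv (p+1) ψ) (Set.Ioi (0:ℝ)) :=
    ((hsm'.continuous).integrable_of_hasCompactSupport (hcs_iter (p+1) hψc)).integrableOn
  rw [integral_Ioi_of_hasDerivAt_of_tendsto (hsm.continuous).continuousWithinAt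
    hderiv hint htend]
  simp

lemma hasDerivAt_F (p : ℕ) {ψ : ℝ → ℝ} (hψ : ContDiff ℝ (⊤ : ℕ∞) ψ) (hψc : HasCompactSupport ψ) :
    HasDerivAt (fun t : ℝ => ∫ x in Set.Ioi (0:ℝ), x ^ t * iteratedDeriv (p+1) ψ x)
      (∫ x in Set.Ioi (0:ℝ), Real.log x * iteratedDeriv (p+1) ψ x) 0 := by
  set φ := iteratedDeriv (p+1) ψ with hφdef
  have hφcont : Continuous φ := (contDiff_iter (p+1) hψ).continuous
  have hφcs : HasCompactSupport φ := hcs_iter (p+1) hψc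
  obtain ⟨C, hC⟩ := hφcont.bounded_above_of_compact_support hφcs
  have hC0 : (0:ℝ) ≤ C := le_trans (norm_nonneg _) (hC 0)
  obtain ⟨r, hr⟩ := (Metric.isBounded_iff_subset_closedBall 0).mp hφcs.isBounded
  set R : ℝ := max r 1 with hRdef
  have hR1 : (1:ℝ) ≤ R := le_max_right _ _
  have hR0 : (0:ℝ) < R := lt_of_lt_of_le one_pos hR1
  have hφzero : ∀ x : ℝ, R < x → φ x = 0 := by
    intro x hx
    apply image_eq_zero_of_notMem_tsupport
    intro hmem
    have := hr hmem
    rw [Metric.mem_closedBall, Real.dist_eq, sub_zero] at this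
    have : x ≤ r := le_trans (le_abs_self x) this
    have : x ≤ R := le_trans this (le_max_left _ _)
    linarith
  set bound : ℝ → ℝ := (Set.Ioc (0:ℝ) R).indicator
    (fun x => C * ((x ^ (-(1:ℝ)/2) + x ^ ((1:ℝ)/2)) * (4 * x ^ (-(1:ℝ)/4) + x))) with hbdef
  -- integrability of the bound
  have hb : IntegrableOn
      (fun x => C * ((x ^ (-(1:ℝ)/2) + x ^ ((1:ℝ)/2)) * (4 * x ^ (-(1:ℝ)/4) + x)))
      (Set.Ioc (0:ℝ) R) := by
    have i1 : ∀ rr : ℝ, -1 < rr →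
        IntegrableOn (fun x : ℝ => x ^ rr) (Set.Ioc (0:ℝ) R) := fun rr h =>
      (intervalIntegral.intervalIntegrable_rpow' h).1
    have key : IntegrableOn
        (fun x : ℝ => C * (4 * x ^ (-(3:ℝ)/4) + x ^ ((1:ℝ)/2) + 4 * x ^ ((1:ℝ)/4)
          + x ^ ((3:ℝ)/2))) (Set.Ioc (0:ℝ) R) := by
      exact (((((i1 _ (by norm_num)).const_mul 4).add (i1 _ (by norm_num))).add
        ((i1 _ (by norm_num)).const_mul 4)).add (i1 _ (by norm_num))).const_mul C
    refine key.congr_fun (fun x hx => ?_) measurableSet_Ioc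
    have hx0 : (0:ℝ) < x := hx.1
    have e1 : x ^ (-(1:ℝ)/2) * x ^ (-(1:ℝ)/4) = x ^ (-(3:ℝ)/4) := by
      rw [← Real.rpow_add hx0]; norm_num
    have e2 : x ^ (-(1:ℝ)/2) * x = x ^ ((1:ℝ)/2) := by
      rw [show ((1:ℝ)/2) = -(1:ℝ)/2 + 1 by norm_num, Real.rpow_add hx0, Real.rpow_one]
    have e3 : x ^ ((1:ℝ)/2) * x ^ (-(1:ℝ)/4) = x ^ ((1:ℝ)/4) := by
      rw [← Real.rpow_add hx0]; norm_num
    have e4 : x ^ ((1:ℝ)/2) * x = x ^ ((3:ℝ)/2) := by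
      rw [show ((3:ℝ)/2) = (1:ℝ)/2 + 1 by norm_num, Real.rpow_add hx0, Real.rpow_one]
    linear_combination (-C) * (4*e1 + e2 + 4*e3 + e4)
  have hbound_int : Integrable bound (volume.restrict (Set.Ioi (0:ℝ))) :=
    ((integrable_indicator_iff measurableSet_Ioc).mpr hb).restrict
  -- measurability
  have hmeas : ∀ t : ℝ, AEStronglyMeasurable (fun x : ℝ => x ^ t * φ x)
      (volume.restrict (Set.Ioi (0:ℝ))) := by
    intro t
    apply ContinuousOn.aestronglyMeasurable _ measurableSet_Ioi
    intro x hx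
    exact ((Real.continuousAt_rpow_const x t (Or.inl (ne_of_gt hx))).mul
      hφcont.continuousAt).continuousWithinAt
  have hmeas' : AEStronglyMeasurable (fun x : ℝ => x ^ (0:ℝ) * Real.log x * φ x)
      (volume.restrict (Set.Ioi (0:ℝ))) := by
    apply ContinuousOn.aestronglyMeasurable _ measurableSet_Ioi
    intro x hx
    exact (((Real.continuousAt_rpow_const x 0 (Or.inl (ne_of_gt hx))).mul
      (Real.continuousAt_log (ne_of_gt hx))).mul hφcont.continuousAt).continuousWithinAt
  have hF_int : Integrable (fun x : ℝ => x ^ (0:ℝ) * φ x)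
      (volume.restrict (Set.Ioi (0:ℝ))) := by
    simp only [Real.rpow_zero, one_mul]
    exact (hφcont.integrable_of_hasCompactSupport hφcs).restrict
  have h_bound : ∀ᵐ x ∂(volume.restrict (Set.Ioi (0:ℝ))), ∀ t ∈ Metric.ball (0:ℝ) (1/2),
      ‖x ^ t * Real.log x * φ x‖ ≤ bound x := by
    rw [ae_restrict_iff' measurableSet_Ioi]
    refine Eventually.of_forall fun x hx t ht => ?_
    have hx0 : (0:ℝ) < x := hx
    rw [Metric.mem_ball, Real.dist_eq, sub_zero] at ht
    have ht' := abs_lt.mp ht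
    rcases le_or_gt x R with hxR | hxR
    · rw [hbdef, Set.indicator_of_mem (Set.mem_Ioc.mpr ⟨hx0, hxR⟩)]
      have hxt : x ^ t ≤ x ^ (-(1:ℝ)/2) + x ^ ((1:ℝ)/2) := by
        rcases le_total x 1 with h1 | h1
        · exact le_add_of_le_of_nonneg
            (Real.rpow_le_rpow_of_exponent_ge hx0 h1 (by linarith [ht'.1]))
            (Real.rpow_nonneg hx0.le _)
        · exact le_add_of_nonneg_of_le (Real.rpow_nonneg hx0.le _)
            (Real.rpow_le_rpow_of_exponent_le h1 (by linarith [ht'.2]))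
      have hlog : |Real.log x| ≤ 4 * x ^ (-(1:ℝ)/4) + x := by
        rcases le_total 1 x with h1 | h1
        · rw [abs_of_nonneg (Real.log_nonneg h1)]
          have h2 := Real.log_le_sub_one_of_pos hx0
          have h3 : (0:ℝ) ≤ x ^ (-(1:ℝ)/4) := Real.rpow_nonneg hx0.le _
          linarith
        · rw [abs_of_nonpos (Real.log_nonpos hx0.le h1)]
          have h2 : Real.log (x ^ (-(1:ℝ)/4)) ≤ x ^ (-(1:ℝ)/4) - 1 :=
            Real.log_le_sub_one_of_pos (Real.rpow_pos_of_pos hx0 _)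
          rw [Real.log_rpow hx0] at h2
          linarith [hx0.le]
      calc ‖x ^ t * Real.log x * φ x‖ = x ^ t * |Real.log x| * ‖φ x‖ := by
            rw [norm_mul, norm_mul, Real.norm_eq_abs, Real.norm_eq_abs,
              abs_of_nonneg (Real.rpow_nonneg hx0.le t)]
        _ ≤ (x ^ (-(1:ℝ)/2) + x ^ ((1:ℝ)/2)) * (4 * x ^ (-(1:ℝ)/4) + x) * C := by
            have g1 : (0:ℝ) ≤ x ^ t := Real.rpow_nonneg hx0.le t
            have g2 : (0:ℝ) ≤ |Real.log x| := abs_nonneg _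
            have g3 : (0:ℝ) ≤ x ^ (-(1:ℝ)/2) + x ^ ((1:ℝ)/2) := by positivity
            exact mul_le_mul (mul_le_mul hxt hlog g2 g3)
              (hC x) (norm_nonneg _) (by positivity)
        _ = C * ((x ^ (-(1:ℝ)/2) + x ^ ((1:ℝ)/2)) * (4 * x ^ (-(1:ℝ)/4) + x)) := by ring
    · have hnm : x ∉ Set.Ioc (0:ℝ) R := fun h => absurd h.2 hxR.not_ge
      rw [hφzero x hxR, hbdef, Set.indicator_of_notMem hnm]
      simp
  have h_diff : ∀ᵐ x ∂(volume.restrict (Set.Ioi (0:ℝ))), ∀ t ∈ Metric.ball (0:ℝ) (1/2),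
      HasDerivAt (fun t : ℝ => x ^ t * φ x) (x ^ t * Real.log x * φ x) t := by
    rw [ae_restrict_iff' measurableSet_Ioi]
    refine Eventually.of_forall fun x hx t _ => ?_
    have hx0 : (0:ℝ) < x := hx
    have h1 : HasDerivAt (fun t : ℝ => Real.log x * t) (Real.log x) t := by
      simpa using (hasDerivAt_id t).const_mul (Real.log x)
    have h2 := (h1.exp).mul_const (φ x)
    simp only [← Real.rpow_def_of_pos hx0] at h2
    exact h2
  have main := hasDerivAt_integral_of_dominated_loc_of_deriv_le (F := fun t x => x ^ t * φ x)
    (F' := fun t x => x ^ t * Real.log x * φ x)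
    (bound := bound) (Metric.ball_mem_nhds 0 one_half_pos) (Eventually.of_forall hmeas) hF_int hmeas'
    h_bound hbound_int h_diff
  have := main.2
  simpa only [Real.rpow_zero, one_mul] using this

end XPlusAux


/-- Hörmander's regularization: for every test function `ψ`,
`⟨x₊^{-p-1}, ψ⟩ = lim_{a → -p-1} ( ⟨x₊^a, ψ⟩ − ψ^{(p)}(0)/(p!(a+p+1)) )`,
the limit being taken over non-integer `a` in a punctured neighbourhood of `-p-1`. -/
theorem xPlusNegInt_eq_limit (p : ℕ) (ψ : ℝ → ℝ)
    (hψ : ContDiff ℝ (⊤ : ℕ∞) ψ) (hψc : HasCompactSupport ψ) :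
    Tendsto
      (fun a : ℝ => xPlusPow p a ψ -
        iteratedDeriv p ψ 0 / (p.factorial * (a + p + 1)))
      (𝓝[{a : ℝ | a ≠ -(p : ℝ) - 1} ∩ Set.Ioi (-(p : ℝ) - 2)] (-(p : ℝ) - 1))
      (𝓝 (xPlusNegInt p ψ)) := by
  classical
  set x₀ : ℝ := -(p:ℝ) - 1 with hx₀
  set φ : ℝ → ℝ := iteratedDeriv (p+1) ψ with hφ
  set D : ℝ := iteratedDeriv p ψ 0 with hD
  set F : ℝ → ℝ := fun t => ∫ x in Set.Ioi (0:ℝ), x ^ t * φ x with hF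
  set L : ℝ := ∫ x in Set.Ioi (0:ℝ), Real.log x * φ x with hL
  set P : ℝ → ℝ := fun a => ∏ k ∈ Finset.Icc 1 p, (a + (k:ℝ)) with hP
  set H : ℝ → ℝ := fun a => (-1:ℝ)^(p+1) / P a * F (a + ((p:ℝ) + 1)) with hH
  have hfact : ((p.factorial : ℕ) : ℝ) ≠ 0 := Nat.cast_ne_zero.mpr p.factorial_ne_zero
  have hProd : P x₀ = (-1)^p * p.factorial := by
    rw [hP]
    simp only []
    rw [← XPlusAux.prod_shift p]
    refine Finset.prod_congr rfl fun k _ => ?_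
    rw [hx₀]; ring
  have hPne : P x₀ ≠ 0 := by
    rw [hProd]
    exact mul_ne_zero (pow_ne_zero _ (by norm_num)) hfact
  set S : ℝ := ∑ k ∈ Finset.Icc 1 p, ∏ j ∈ (Finset.Icc 1 p).erase k, (x₀ + (j:ℝ)) with hS
  have hPd : HasDerivAt P S x₀ := by
    have h := HasDerivAt.fun_finsetProd (u := Finset.Icc 1 p) (f := fun k a => a + (k:ℝ))
      (f' := fun _ => 1) (x := x₀) (fun k _ => (hasDerivAt_id x₀).add_const (k:ℝ))
    rw [hP, hS]
    simpa using h
  have hsum : S = (-1)^p * p.factorial * (-(kappa p)) := by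
    rw [hS]
    have h1 : ∀ k ∈ Finset.Icc 1 p, (∏ j ∈ (Finset.Icc 1 p).erase k, (x₀ + (j:ℝ)))
        = ((-1:ℝ)^p * p.factorial) / (x₀ + (k:ℝ)) := by
      intro k hk
      have hk2 : (k:ℝ) ≤ p := by exact_mod_cast (Finset.mem_Icc.mp hk).2
      have hkne : x₀ + (k:ℝ) ≠ 0 := by rw [hx₀]; intro h; nlinarith
      rw [eq_div_iff hkne, Finset.prod_erase_mul _ _ hk]
      exact hProd
    rw [Finset.sum_congr rfl h1]
    have h2 : ∀ k ∈ Finset.Icc 1 p, ((-1:ℝ)^p * p.factorial) / (x₀ + (k:ℝ))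
        = ((-1:ℝ)^p * p.factorial) * (1 / ((k:ℝ) - p - 1)) := by
      intro k _
      rw [hx₀, mul_one_div]
      congr 1
      ring
    rw [Finset.sum_congr rfl h2, ← Finset.mul_sum, XPlusAux.sum_inv_shift p, kappa]
  have hFd : HasDerivAt F L 0 := by
    rw [hF, hL, hφ]
    exact XPlusAux.hasDerivAt_F p hψ hψc
  have h0arg : x₀ + ((p:ℝ)+1) = 0 := by rw [hx₀]; ring
  have hFcomp : HasDerivAt (fun a => F (a + ((p:ℝ)+1))) L x₀ := by
    rw [← h0arg] at hFd
    have h := hFd.comp x₀ ((hasDerivAt_id x₀).add_const ((p:ℝ)+1))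
    rw [mul_one] at h
    exact h
  have hGd : HasDerivAt (fun a => (-1:ℝ)^(p+1) / P a)
      ((0 * P x₀ - (-1:ℝ)^(p+1) * S) / P x₀ ^ 2) x₀ :=
    (hasDerivAt_const x₀ ((-1:ℝ)^(p+1))).div hPd hPne
  have hHd : HasDerivAt H
      (((0 * P x₀ - (-1:ℝ)^(p+1) * S) / P x₀ ^ 2) * F (x₀ + ((p:ℝ)+1))
        + ((-1:ℝ)^(p+1) / P x₀) * L) x₀ := by
    rw [hH]
    exact hGd.mul hFcomp
  have hF0 : F 0 = -D := by
    rw [hF]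
    simp only [Real.rpow_zero, one_mul]
    rw [hφ, hD]
    exact XPlusAux.integral_Ioi_iter p hψ hψc
  have hGval : (-1:ℝ)^(p+1) / P x₀ = -1 / p.factorial := by
    rw [hProd, pow_succ, div_eq_div_iff (by rw [← hProd]; exact hPne) hfact]
    ring
  have hG'val : (0 * P x₀ - (-1:ℝ)^(p+1) * S) / P x₀ ^ 2 = -(kappa p) / p.factorial := by
    rw [hsum, hProd, pow_succ, div_eq_div_iff (by positivity) hfact]
    ring
  have hHd' : HasDerivAt H (xPlusNegInt p ψ) x₀ := by
    convert hHd using 1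
    rw [hG'val, hGval, h0arg, hF0, xPlusNegInt, ← hφ, ← hL, ← hD]
    ring
  have hHval : H x₀ = D / p.factorial := by
    rw [hH]
    simp only []
    rw [h0arg, hF0, hGval]
    ring
  have heq : ∀ a : ℝ, xPlusPow p a ψ - D / (p.factorial * (a + p + 1)) = slope H x₀ a := by
    intro a
    have hax : a - x₀ = a + (p:ℝ) + 1 := by rw [hx₀]; ring
    rw [slope_def_field, hHval, hax, hH]
    simp only []
    have hsplit : (∏ k ∈ Finset.Icc 1 (p+1), (a + (k:ℝ)))
        = P a * (a + (p:ℝ) + 1) := by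
      rw [Finset.prod_Icc_succ_top (Nat.le_add_left 1 p), hP]
      push_cast
      ring
    have hFa : F (a + ((p:ℝ)+1)) = ∫ x in Set.Ioi (0:ℝ), x ^ (a + (p:ℝ) + 1) * φ x := by
      rw [hF]
      simp only []
      rw [show a + ((p:ℝ)+1) = a + (p:ℝ) + 1 by ring]
    rw [xPlusPow, hsplit, ← hφ, ← hFa]
    rw [div_mul_eq_mul_div, div_mul_eq_mul_div, ← div_div, ← div_div, sub_div]
  have hslope : Tendsto (slope H x₀) (𝓝[≠] x₀) (𝓝 (xPlusNegInt p ψ)) :=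
    hasDerivAt_iff_tendsto_slope.mp hHd'
  refine Tendsto.congr (fun a => (heq a).symm)
    (hslope.mono_left (nhdsWithin_mono _ ?_))
  intro a ha
  exact Set.mem_compl_singleton_iff.mpr ha.1
end
end

section
/- For every p ∈ ℕ, the distributions x₊^{−p} and x₋^{−p} satisfy ∂(x₊^{−p}) = −p·x₊^{−p−1} + ((−1)^p/p!)·δ^{(p)} and ∂(x₋^{−p}) = p·x₋^{−p−1} − (1/p!)·δ^{(p)} in D'(ℝ). -/
open MeasureTheory Filter Topology

noncomputable section

/-- The pairing `⟨x₊^{-p}, ψ⟩`.  For `p = 0` this is the Heaviside function `θ`;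
for `p = q+1` it is given by the Hörmander regularization
`x₊^{-q-1} = ((-1)^q/q!) ∂^{q+1} ln x₊ + ((-1)^q κ_q/q!) δ^{(q)}`, i.e.
`⟨x₊^{-q-1}, ψ⟩ = (-1/q!) ∫_0^∞ ln x · ψ^{(q+1)} dx + (κ_q/q!) ψ^{(q)}(0)`. -/
def xPlusNeg : ℕ → (ℝ → ℝ) → ℝ
  | 0, ψ => ∫ x in Set.Ioi (0 : ℝ), ψ x
  | (q+1), ψ =>
      (-1 / q.factorial) * (∫ x in Set.Ioi (0 : ℝ), Real.log x * iteratedDeriv (q + 1) ψ x)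
        + (kappa q / q.factorial) * iteratedDeriv q ψ 0

/-- The pairing `⟨x₋^{-p}, ψ⟩`.  For `p = 0` this is the reflected Heaviside function;
for `p = q+1` it is given by `x₋^{-q-1} = (-1/q!) ∂^{q+1} ln x₋ + (κ_q/q!) δ^{(q)}`, i.e.
`⟨x₋^{-q-1}, ψ⟩ = ((-1)^q/q!) ∫_{-∞}^0 ln(-x) · ψ^{(q+1)} dx + ((-1)^q κ_q/q!) ψ^{(q)}(0)`. -/
def xMinusNeg : ℕ → (ℝ → ℝ) → ℝ
  | 0, ψ => ∫ x in Set.Iio (0 : ℝ), ψ x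
  | (q+1), ψ =>
      ((-1 : ℝ)^q / q.factorial) *
          (∫ x in Set.Iio (0 : ℝ), Real.log (-x) * iteratedDeriv (q + 1) ψ x)
        + ((-1 : ℝ)^q * kappa q / q.factorial) * iteratedDeriv q ψ 0

lemma kappa_succ (q : ℕ) : kappa (q + 1) = kappa q + 1 / (q + 1) := by
  unfold kappa
  rw [Finset.sum_Icc_succ_top (by omega : 1 ≤ q + 1)]
  push_cast
  ring

lemma integral_Iio_deriv_eq {ψ : ℝ → ℝ} (hψ : ContDiff ℝ 1 ψ)
    (hψc : HasCompactSupport ψ) : ∫ x in Set.Iio (0 : ℝ), deriv ψ x = ψ 0 := by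
  have hg : ContDiff ℝ 1 (fun x => ψ (-x)) := hψ.comp (contDiff_neg)
  have hgc : HasCompactSupport (fun x => ψ (-x)) := by
    have := hψc.comp_homeomorph (Homeomorph.neg ℝ)
    simpa [Function.comp_def] using this
  have key := hgc.integral_Ioi_deriv_eq hg 0
  have hder : ∀ x : ℝ, deriv (fun x => ψ (-x)) x = -deriv ψ (-x) := fun x => deriv_comp_neg ψ x
  rw [MeasureTheory.integral_congr_ae (Filter.Eventually.of_forall hder)] at key
  rw [MeasureTheory.integral_neg] at key
  have : ∫ x in Set.Ioi (0:ℝ), deriv ψ (-x) = ψ 0 := by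
    simpa using key
  rw [integral_comp_neg_Ioi] at this
  simpa [MeasureTheory.integral_Iic_eq_integral_Iio] using this

/-- For every `p ∈ ℕ`, in `D'(ℝ)`:
`∂(x₊^{−p}) = −p·x₊^{−p−1} + ((−1)^p/p!)·δ^{(p)}` and
`∂(x₋^{−p}) = p·x₋^{−p−1} − (1/p!)·δ^{(p)}`, stated weakly against every test function `ψ`
(recall `⟨∂u, ψ⟩ = −⟨u, ψ'⟩` and `⟨δ^{(p)}, ψ⟩ = (−1)^p ψ^{(p)}(0)`). -/
theorem deriv_xPlusNeg_xMinusNeg (p : ℕ) (ψ : ℝ → ℝ)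
    (hψ : ContDiff ℝ (⊤ : ℕ∞) ψ) (hψc : HasCompactSupport ψ) :
    (-(xPlusNeg p (deriv ψ)) =
        -(p : ℝ) * xPlusNeg (p + 1) ψ
          + ((-1 : ℝ)^p / p.factorial) * ((-1 : ℝ)^p * iteratedDeriv p ψ 0)) ∧
    (-(xMinusNeg p (deriv ψ)) =
        (p : ℝ) * xMinusNeg (p + 1) ψ
          - (1 / p.factorial) * ((-1 : ℝ)^p * iteratedDeriv p ψ 0)) := by
  cases p with
  | zero =>
    have h1 : ∫ x in Set.Ioi (0:ℝ), deriv ψ x = -ψ 0 :=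
      hψc.integral_Ioi_deriv_eq (hψ.of_le (by simp)) 0
    have h2 : ∫ x in Set.Iio (0:ℝ), deriv ψ x = ψ 0 :=
      integral_Iio_deriv_eq (hψ.of_le (by simp)) hψc
    constructor
    · show -(∫ x in Set.Ioi (0:ℝ), deriv ψ x) = _
      simp [xPlusNeg, h1]
    · show -(∫ x in Set.Iio (0:ℝ), deriv ψ x) = _
      simp [xMinusNeg, h2]
  | succ q =>
    have hiter : ∀ n : ℕ, iteratedDeriv n (deriv ψ) = iteratedDeriv (n + 1) ψ :=
      fun n => (iteratedDeriv_succ' (n := n) (f := ψ)).symm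
    have hfac : ((q + 1).factorial : ℝ) = (q + 1) * q.factorial := by
      rw [Nat.factorial_succ]; push_cast; ring
    have hq : (0:ℝ) < (q:ℝ) + 1 := by positivity
    have hsign : ((-1:ℝ)^q = 1 ∧ (-1:ℝ)^(q+1) = -1) ∨
        ((-1:ℝ)^q = -1 ∧ (-1:ℝ)^(q+1) = 1) := by
      rcases Nat.even_or_odd q with h | h
      · exact Or.inl ⟨h.neg_one_pow, h.add_one.neg_one_pow⟩
      · exact Or.inr ⟨h.neg_one_pow, h.add_one.neg_one_pow⟩
    have hqf : (0:ℝ) < (q.factorial : ℝ) := by positivity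
    constructor
    · show -((-1 / q.factorial) *
          (∫ x in Set.Ioi (0 : ℝ), Real.log x * iteratedDeriv (q + 1) (deriv ψ) x)
            + (kappa q / q.factorial) * iteratedDeriv q (deriv ψ) 0) =
        -((q:ℕ) + 1 : ℕ) * ((-1 / (q+1).factorial) *
          (∫ x in Set.Ioi (0 : ℝ), Real.log x * iteratedDeriv (q + 2) ψ x)
            + (kappa (q+1) / (q+1).factorial) * iteratedDeriv (q+1) ψ 0) + _
      rw [hiter, hiter, kappa_succ, hfac]
      push_cast
      rcases hsign with ⟨h1, h2⟩ | ⟨h1, h2⟩ <;> simp only [h1, h2] <;> field_simp <;> ring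
    · show -(((-1 : ℝ)^q / q.factorial) *
          (∫ x in Set.Iio (0 : ℝ), Real.log (-x) * iteratedDeriv (q + 1) (deriv ψ) x)
            + ((-1 : ℝ)^q * kappa q / q.factorial) * iteratedDeriv q (deriv ψ) 0) =
        ((q:ℕ) + 1 : ℕ) * (((-1 : ℝ)^(q+1) / (q+1).factorial) *
          (∫ x in Set.Iio (0 : ℝ), Real.log (-x) * iteratedDeriv (q + 2) ψ x)
            + ((-1 : ℝ)^(q+1) * kappa (q+1) / (q+1).factorial) * iteratedDeriv (q+1) ψ 0) - _
      rw [hiter, hiter, kappa_succ, hfac]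
      push_cast
      rcases hsign with ⟨h1, h2⟩ | ⟨h1, h2⟩ <;> simp only [h1, h2] <;> field_simp <;> ring
end
end

section
/- For every p ∈ ℕ, the boundary-value distributions satisfy (x ± i0)^{−p−1} := lim_{y→0⁺}(x ± iy)^{−p−1} = x^{−p−1} ∓ ((−1)^p iπ/p!)·δ^{(p)}(x) in D'(ℝ), where the limit is in the sense of distributions. -/
open MeasureTheory Filter Topology
open Set

noncomputable section

lemma hcs_iteratedDeriv {ψ : ℝ → ℂ} (h : HasCompactSupport ψ) (n : ℕ) :
    HasCompactSupport (iteratedDeriv n ψ) := by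
  induction n with
  | zero => simpa using h
  | succ n ih => rw [iteratedDeriv_succ]; exact ih.deriv

lemma cd_iteratedDeriv {ψ : ℝ → ℂ} (h : ContDiff ℝ (⊤:ℕ∞) ψ) (n : ℕ) :
    ContDiff ℝ (⊤:ℕ∞) (iteratedDeriv n ψ) := by
  induction n with
  | zero => simpa using h
  | succ n ih => rw [iteratedDeriv_succ]; exact (contDiff_infty_iff_deriv.mp ih).2

lemma integrableOn_abs_log_Ioc (R : ℝ) :
    IntegrableOn (fun x : ℝ => |Real.log x|) (Ioc 0 R) := by
  rcases le_or_gt R 0 with hR | hR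
  · rw [Ioc_eq_empty (by exact fun h => absurd (h.trans_le hR) (lt_irrefl 0))]
    exact integrableOn_empty
  · have hbound : IntegrableOn (fun x : ℝ => 2 * x ^ (-(1/2) : ℝ) + |Real.log R|) (Ioc 0 R) := by
      apply Integrable.add
      · have h := intervalIntegral.intervalIntegrable_rpow' (a := 0) (b := R)
          (r := -(1/2)) (by norm_num)
        rw [intervalIntegrable_iff_integrableOn_Ioc_of_le hR.le] at h
        exact h.const_mul 2
      · refine (integrableOn_const_iff).mpr (Or.inr ?_)
        simp [Real.volume_Ioc]
    refine Integrable.mono' hbound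
      (Real.measurable_log.abs.aestronglyMeasurable) ?_
    filter_upwards [ae_restrict_mem measurableSet_Ioc] with t ht
    rw [Real.norm_eq_abs, abs_abs]
    have ht0 : 0 < t := ht.1
    have hrpos : (0:ℝ) < t ^ (-(1/2) : ℝ) := Real.rpow_pos_of_pos ht0 _
    rcases le_or_gt t 1 with h1 | h1
    · have hlog : Real.log t ≤ 0 := Real.log_nonpos ht0.le h1
      have key : -Real.log t ≤ 2 * t ^ (-(1/2) : ℝ) := by
        have e1 : Real.log (t ^ (-(1/2) : ℝ)) = -(1/2) * Real.log t := Real.log_rpow ht0 _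
        have e2 : Real.log (t ^ (-(1/2) : ℝ)) ≤ t ^ (-(1/2) : ℝ) - 1 :=
          Real.log_le_sub_one_of_pos hrpos
        nlinarith
      have habs : |Real.log t| = -Real.log t := abs_of_nonpos hlog
      have h3 : (0:ℝ) ≤ |Real.log R| := abs_nonneg _
      linarith
    · have habs : |Real.log t| = Real.log t := abs_of_nonneg (Real.log_nonneg h1.le)
      have h2 : Real.log t ≤ Real.log R := Real.log_le_log ht0 ht.2
      have h3 : Real.log R ≤ |Real.log R| := le_abs_self _
      nlinarith

lemma integrableOn_abs_log_abs_Icc {R : ℝ} (hR : 0 ≤ R) :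
    IntegrableOn (fun x : ℝ => |Real.log (|x|)|) (Icc (-R) R) := by
  have h1 : IntegrableOn (fun x : ℝ => |Real.log (|x|)|) (Ioc 0 R) := by
    refine (integrableOn_abs_log_Ioc R).congr_fun (fun x hx => ?_) measurableSet_Ioc
    rw [abs_of_pos hx.1]
  have h1' : IntervalIntegrable (fun x : ℝ => |Real.log (|x|)|) volume 0 (R + 1) := by
    rw [intervalIntegrable_iff_integrableOn_Ioc_of_le (show (0:ℝ) ≤ R+1 by linarith)]
    refine (integrableOn_abs_log_Ioc (R+1)).congr_fun (fun x hx => ?_) measurableSet_Ioc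
    rw [abs_of_pos hx.1]
  have h2 : IntegrableOn (fun x : ℝ => |Real.log (|x|)|) (Ioc (-(R+1)) 0) := by
    have := ((IntervalIntegrable.iff_comp_neg (by simp)).mp h1')
    simp only [abs_neg, neg_zero] at this
    rw [← intervalIntegrable_iff_integrableOn_Ioc_of_le (show -(R+1) ≤ (0:ℝ) by linarith)]
    exact this.symm
  refine IntegrableOn.mono_set (h2.union h1) (fun x hx => ?_)
  rcases le_or_gt x 0 with h | h
  · exact Or.inl ⟨by linarith [hx.1], h⟩
  · exact Or.inr ⟨h, hx.2⟩

lemma locallyIntegrable_abs_log_abs :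
    LocallyIntegrable (fun x : ℝ => |Real.log (|x|)|) volume := by
  rw [locallyIntegrable_iff]
  intro K hK
  obtain ⟨R, hR⟩ := hK.isBounded.subset_closedBall 0
  rcases le_or_gt 0 R with h | h
  · refine IntegrableOn.mono_set (integrableOn_abs_log_abs_Icc h) ?_
    refine hR.trans ?_
    rw [Real.closedBall_eq_Icc]; simp
  · have : K ⊆ (∅ : Set ℝ) := by
      refine hR.trans ?_
      rw [Metric.closedBall_eq_empty.mpr h]
    rw [subset_empty_iff] at this
    simp [this]

lemma locallyIntegrable_log_abs :
    LocallyIntegrable (fun x : ℝ => Real.log (|x|)) volume := by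
  rw [locallyIntegrable_iff]
  intro K hK
  refine Integrable.mono' (locallyIntegrable_abs_log_abs.integrableOn_isCompact hK)
    ((Real.measurable_log.comp measurable_abs).aestronglyMeasurable) ?_
  filter_upwards with t
  rw [Real.norm_eq_abs]

section IBP

variable {c : ℂ}

lemma ne_zero_of_im_ne (hc : c.im ≠ 0) (x : ℝ) : (x : ℂ) + c ≠ 0 := by
  intro h
  have := congrArg Complex.im h
  simp at this
  exact hc this

lemma mem_slit_of_im_ne (hc : c.im ≠ 0) (x : ℝ) : ((x : ℂ) + c) ∈ Complex.slitPlane := by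
  refine Or.inr ?_
  simpa using hc

lemma hasDerivAt_log_shift (hc : c.im ≠ 0) (x : ℝ) :
    HasDerivAt (fun t : ℝ => Complex.log ((t : ℂ) + c)) (((x : ℂ) + c)⁻¹) x := by
  have h1 : HasDerivAt (fun z : ℂ => Complex.log (z + c)) (((x : ℂ) + c)⁻¹) (x : ℂ) := by
    have := (Complex.hasDerivAt_log (mem_slit_of_im_ne hc x)).comp (x : ℂ)
      ((hasDerivAt_id ((x : ℂ))).add_const c)
    simpa [Function.comp_def] using this
  exact h1.comp_ofReal

lemma hasDerivAt_zpow_shift (hc : c.im ≠ 0) (n : ℤ) (x : ℝ) :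
    HasDerivAt (fun t : ℝ => ((t : ℂ) + c) ^ n) ((n : ℂ) * ((x : ℂ) + c) ^ (n - 1)) x := by
  have h1 : HasDerivAt (fun z : ℂ => (z + c) ^ n) ((n : ℂ) * ((x : ℂ) + c) ^ (n - 1)) (x : ℂ) := by
    have := (hasDerivAt_zpow n ((x : ℂ) + c) (Or.inl (ne_zero_of_im_ne hc x))).comp (x : ℂ)
      ((hasDerivAt_id ((x : ℂ))).add_const c)
    simpa [Function.comp_def] using this
  exact h1.comp_ofReal

lemma continuous_log_shift (hc : c.im ≠ 0) :
    Continuous (fun t : ℝ => Complex.log ((t : ℂ) + c)) :=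
  (Complex.continuous_ofReal.add continuous_const).clog (fun x => mem_slit_of_im_ne hc x)

lemma continuous_zpow_shift (hc : c.im ≠ 0) (n : ℤ) :
    Continuous (fun t : ℝ => ((t : ℂ) + c) ^ n) :=
  (Complex.continuous_ofReal.add continuous_const).zpow₀ n
    (fun x => Or.inl (ne_zero_of_im_ne hc x))

lemma ibp_aux (hc : c.im ≠ 0) :
    ∀ (k : ℕ) (φ : ℝ → ℂ), ContDiff ℝ (⊤:ℕ∞) φ → HasCompactSupport φ →
    ∫ x : ℝ, ((x : ℂ) + c) ^ (-(k : ℤ) - 1) * φ x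
      = (-1 / (k.factorial : ℂ)) * ∫ x : ℝ, Complex.log ((x : ℂ) + c) * iteratedDeriv (k+1) φ x := by
  intro k
  induction k with
  | zero =>
    intro φ hφ hφc
    have hd : ∀ x : ℝ, HasDerivAt φ (deriv φ x) x :=
      fun x => (hφ.differentiable (by simp) x).hasDerivAt
    have hdc : Continuous (deriv φ) := (contDiff_infty_iff_deriv.mp hφ).2.continuous
    have h := MeasureTheory.integral_mul_deriv_eq_deriv_mul_of_integrable
      (u := fun x : ℝ => Complex.log ((x : ℂ) + c)) (u' := fun x : ℝ => ((x : ℂ) + c)⁻¹)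
      (v := φ) (v' := deriv φ)
      (fun x _ => hasDerivAt_log_shift hc x) (fun x _ => hd x)
      (((continuous_log_shift hc).mul hdc).integrable_of_hasCompactSupport hφc.deriv.mul_left)
      (((continuous_zpow_shift hc (-1)).congr (fun x => by simp)).mul
        hφ.continuous |>.integrable_of_hasCompactSupport hφc.mul_left)
      (((continuous_log_shift hc).mul hφ.continuous).integrable_of_hasCompactSupport hφc.mul_left)
    have e0 : ∫ x : ℝ, ((x:ℂ)+c) ^ (-((0:ℕ):ℤ) - 1) * φ x = ∫ x : ℝ, ((x:ℂ)+c)⁻¹ * φ x := by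
      congr 1; funext x; norm_num
    have e1 : iteratedDeriv (0+1) φ = deriv φ := by
      rw [show (0+1 : ℕ) = 1 from rfl, iteratedDeriv_one]
    rw [e0, e1, h, Nat.factorial_zero]
    push_cast
    ring
  | succ k ih =>
    intro φ hφ hφc
    have hd : ∀ x : ℝ, HasDerivAt φ (deriv φ x) x :=
      fun x => (hφ.differentiable (by simp) x).hasDerivAt
    have hdc : Continuous (deriv φ) := (contDiff_infty_iff_deriv.mp hφ).2.continuous
    have hdφ : ContDiff ℝ (⊤:ℕ∞) (deriv φ) := (contDiff_infty_iff_deriv.mp hφ).2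
    have h := MeasureTheory.integral_mul_deriv_eq_deriv_mul_of_integrable
      (u := fun x : ℝ => ((x : ℂ) + c) ^ (-(k : ℤ) - 1))
      (u' := fun x : ℝ => ((-(k : ℤ) - 1 : ℤ) : ℂ) * ((x : ℂ) + c) ^ (-(k : ℤ) - 2))
      (v := φ) (v' := deriv φ)
      (fun x _ => by
        have := hasDerivAt_zpow_shift hc (-(k : ℤ) - 1) x
        convert this using 2
        all_goals first | rfl | ring_nf)
      (fun x _ => hd x)
      (((continuous_zpow_shift hc _).mul hdc).integrable_of_hasCompactSupport hφc.deriv.mul_left)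
      (((continuous_const.mul (continuous_zpow_shift hc (-(k : ℤ) - 2))).mul
        hφ.continuous).integrable_of_hasCompactSupport hφc.mul_left)
      (((continuous_zpow_shift hc _).mul hφ.continuous).integrable_of_hasCompactSupport
        hφc.mul_left)
    have hIH := ih (deriv φ) hdφ hφc.deriv
    have hne : ((k : ℂ) + 1) ≠ 0 := by
      have := Nat.cast_ne_zero (R := ℂ).mpr (Nat.succ_ne_zero k)
      push_cast at this
      exact this
    have goalLHS : ∫ x : ℝ, ((x : ℂ) + c) ^ (-((k+1 : ℕ) : ℤ) - 1) * φ x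
        = ∫ x : ℝ, ((x : ℂ) + c) ^ (-(k : ℤ) - 2) * φ x := by
      congr 1; funext x; congr 1; push_cast; ring_nf
    rw [goalLHS]
    have h2 : ∫ x : ℝ, ((x : ℂ) + c) ^ (-(k : ℤ) - 1) * deriv φ x
        = ((k : ℂ) + 1) * ∫ x : ℝ, ((x : ℂ) + c) ^ (-(k : ℤ) - 2) * φ x := by
      rw [h, ← MeasureTheory.integral_const_mul, ← integral_neg]
      congr 1; funext x; push_cast; ring
    have h3 : ∫ x : ℝ, ((x : ℂ) + c) ^ (-(k : ℤ) - 2) * φ x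
        = (((k : ℂ) + 1))⁻¹ * ∫ x : ℝ, ((x : ℂ) + c) ^ (-(k : ℤ) - 1) * deriv φ x := by
      rw [h2]
      rw [← mul_assoc, inv_mul_cancel₀ hne, one_mul]
    rw [h3, hIH, ← iteratedDeriv_succ']
    rw [Nat.factorial_succ]
    have hfac : ((k.factorial : ℂ)) ≠ 0 :=
      Nat.cast_ne_zero.mpr (Nat.factorial_ne_zero k)
    push_cast
    field_simp

end IBP

section Limit

lemma ae_ne_zero : ∀ᵐ x : ℝ, x ≠ 0 := by
  rw [ae_iff]
  have : {x : ℝ | ¬ x ≠ 0} = {0} := by ext x; simp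
  rw [this]
  exact measure_singleton 0

lemma log_bound {x y : ℝ} (hx : x ≠ 0) (hy0 : 0 < y) (hy1 : y ≤ 1) {z : ℂ}
    (hre : z.re = x) (him : |z.im| = y) :
    ‖Complex.log z‖ ≤ |Real.log (|x|)| + |x| + Real.pi := by
  have hxpos : 0 < |x| := abs_pos.2 hx
  have hz1 : |x| ≤ ‖z‖ := by
    have := Complex.abs_re_le_norm z
    rwa [hre] at this
  have hzpos : 0 < ‖z‖ := lt_of_lt_of_le hxpos hz1
  have hz2 : ‖z‖ ≤ |x| + 1 := by
    have := Complex.norm_le_abs_re_add_abs_im z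
    rw [hre, him] at this
    linarith
  have step1 : ‖Complex.log z‖ ≤ |Real.log (‖z‖)| + Real.pi := by
    refine (Complex.norm_le_abs_re_add_abs_im _).trans ?_
    rw [Complex.log_re, Complex.log_im]
    exact add_le_add_right (Complex.abs_arg_le_pi z) _
  have step2 : |Real.log (‖z‖)| ≤ |Real.log (|x|)| + |x| := by
    rcases le_or_gt (‖z‖) 1 with h1 | h1
    · have hlog : Real.log (‖z‖) ≤ 0 := Real.log_nonpos hzpos.le h1
      have hmono : Real.log (|x|) ≤ Real.log (‖z‖) := Real.log_le_log hxpos hz1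
      have : |Real.log (‖z‖)| = -Real.log (‖z‖) := abs_of_nonpos hlog
      have h4 : -Real.log (|x|) ≤ |Real.log (|x|)| := neg_le_abs _
      have h5 : (0:ℝ) ≤ |x| := abs_nonneg x
      linarith
    · have hlog : 0 ≤ Real.log (‖z‖) := Real.log_nonneg h1.le
      have h2 : Real.log (‖z‖) ≤ ‖z‖ - 1 :=
        Real.log_le_sub_one_of_pos hzpos
      have h4 : (0:ℝ) ≤ |Real.log (|x|)| := abs_nonneg _
      rw [abs_of_nonneg hlog]
      linarith
  calc ‖Complex.log z‖ ≤ |Real.log (‖z‖)| + Real.pi := step1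
    _ ≤ |Real.log (|x|)| + |x| + Real.pi := by linarith

lemma bound_integrable {φ : ℝ → ℂ} (hφ : Continuous φ) (hc : HasCompactSupport φ) :
    Integrable (fun x : ℝ => (|Real.log (|x|)| + |x| + Real.pi) * ‖φ x‖) := by
  have e : (fun x : ℝ => (|Real.log (|x|)| + |x| + Real.pi) * ‖φ x‖)
      = fun x => ‖φ x‖ • |Real.log (|x|)| + ((|x| + Real.pi) * ‖φ x‖) := by
    funext x; simp only [smul_eq_mul]; ring
  rw [e]
  exact (locallyIntegrable_abs_log_abs.integrable_smul_left_of_hasCompactSupport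
      hφ.norm hc.norm).add
    (((continuous_abs.add continuous_const).mul hφ.norm).integrable_of_hasCompactSupport
      hc.norm.mul_left)

lemma limit_plus {φ : ℝ → ℂ} (hφ : Continuous φ) (hc : HasCompactSupport φ) :
    Tendsto (fun y : ℝ => ∫ x : ℝ, Complex.log ((x:ℂ) + (y:ℂ) * Complex.I) * φ x) (𝓝[>] (0:ℝ))
      (𝓝 (∫ x : ℝ, ((Real.log (|x|) : ℂ) +
          Set.indicator (Iio 0) (fun _ => (Real.pi : ℂ) * Complex.I) x) * φ x)) := by
  apply tendsto_integral_filter_of_dominated_convergence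
      (bound := fun x => (|Real.log (|x|)| + |x| + Real.pi) * ‖φ x‖)
  · filter_upwards [self_mem_nhdsWithin] with y (hy : (0:ℝ) < y)
    refine Continuous.aestronglyMeasurable (Continuous.mul ?_ hφ)
    refine (Complex.continuous_ofReal.add continuous_const).clog (fun x => Or.inr ?_)
    simpa using hy.ne'
  · filter_upwards [Ioc_mem_nhdsGT_of_mem (Set.left_mem_Ico.mpr one_pos)]
      with y (hy : y ∈ Ioc (0:ℝ) 1)
    filter_upwards [ae_ne_zero] with x hx
    rw [norm_mul]
    refine mul_le_mul_of_nonneg_right ?_ (norm_nonneg _)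
    refine log_bound hx hy.1 hy.2 ?_ ?_ <;> simp [abs_of_pos hy.1]
  · exact bound_integrable hφ hc
  · filter_upwards [ae_ne_zero] with x hx
    refine Tendsto.mul_const _ ?_
    have hbase : Tendsto (fun y : ℝ => (x:ℂ) + (y:ℂ) * Complex.I) (𝓝[>] (0:ℝ)) (𝓝 (x:ℂ)) := by
      have hcont : Continuous (fun y : ℝ => (x:ℂ) + (y:ℂ) * Complex.I) := by continuity
      have := hcont.tendsto (0:ℝ)
      simp only [Complex.ofReal_zero, zero_mul, add_zero] at this
      exact this.mono_left nhdsWithin_le_nhds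
    rcases lt_or_gt_of_ne hx with hneg | hpos
    · have hmem : ∀ᶠ y : ℝ in 𝓝[>] (0:ℝ),
          ((x:ℂ) + (y:ℂ) * Complex.I) ∈ {z : ℂ | 0 ≤ z.im} := by
        filter_upwards [self_mem_nhdsWithin] with y (hy : (0:ℝ) < y)
        simp [hy.le]
      have hin : Tendsto (fun y : ℝ => (x:ℂ) + (y:ℂ) * Complex.I) (𝓝[>] (0:ℝ))
          (𝓝[{z : ℂ | 0 ≤ z.im}] (x:ℂ)) :=
        tendsto_nhdsWithin_of_tendsto_nhds_of_eventually_within _ hbase hmem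
      have hlog := (Complex.tendsto_log_nhdsWithin_im_nonneg_of_re_neg_of_im_zero
        (by simpa using hneg) (by simp)).comp hin
      convert hlog using 2
      · rfl
      rw [Set.indicator_of_mem (by exact hneg : x ∈ Iio (0:ℝ))]
      simp [Complex.norm_real]
    · have hlog := (continuousAt_clog (Or.inl (by simpa using hpos))).tendsto.comp hbase
      convert hlog using 2
      · rfl
      rw [Set.indicator_of_notMem (by simpa using hpos.le : x ∉ Iio (0:ℝ)), add_zero,
        abs_of_pos hpos, Complex.ofReal_log hpos.le]

lemma limit_minus {φ : ℝ → ℂ} (hφ : Continuous φ) (hc : HasCompactSupport φ) :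
    Tendsto (fun y : ℝ => ∫ x : ℝ, Complex.log ((x:ℂ) - (y:ℂ) * Complex.I) * φ x) (𝓝[>] (0:ℝ))
      (𝓝 (∫ x : ℝ, ((Real.log (|x|) : ℂ) -
          Set.indicator (Iio 0) (fun _ => (Real.pi : ℂ) * Complex.I) x) * φ x)) := by
  apply tendsto_integral_filter_of_dominated_convergence
      (bound := fun x => (|Real.log (|x|)| + |x| + Real.pi) * ‖φ x‖)
  · filter_upwards [self_mem_nhdsWithin] with y (hy : (0:ℝ) < y)
    refine Continuous.aestronglyMeasurable (Continuous.mul ?_ hφ)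
    refine (Complex.continuous_ofReal.sub continuous_const).clog (fun x => Or.inr ?_)
    simp only [Pi.sub_apply, Complex.sub_im, Complex.ofReal_im, Complex.mul_im, Complex.ofReal_re,
      Complex.I_im, Complex.I_re, Complex.ofReal_im, mul_one, mul_zero]
    simpa using hy.ne'
  · filter_upwards [Ioc_mem_nhdsGT_of_mem (Set.left_mem_Ico.mpr one_pos)]
      with y (hy : y ∈ Ioc (0:ℝ) 1)
    filter_upwards [ae_ne_zero] with x hx
    rw [norm_mul]
    refine mul_le_mul_of_nonneg_right ?_ (norm_nonneg _)
    refine log_bound hx hy.1 hy.2 ?_ ?_ <;> simp [abs_of_pos hy.1]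
  · exact bound_integrable hφ hc
  · filter_upwards [ae_ne_zero] with x hx
    refine Tendsto.mul_const _ ?_
    have hbase : Tendsto (fun y : ℝ => (x:ℂ) - (y:ℂ) * Complex.I) (𝓝[>] (0:ℝ)) (𝓝 (x:ℂ)) := by
      have hcont : Continuous (fun y : ℝ => (x:ℂ) - (y:ℂ) * Complex.I) := by continuity
      have := hcont.tendsto (0:ℝ)
      simp only [Complex.ofReal_zero, zero_mul, sub_zero] at this
      exact this.mono_left nhdsWithin_le_nhds
    rcases lt_or_gt_of_ne hx with hneg | hpos
    · have hmem : ∀ᶠ y : ℝ in 𝓝[>] (0:ℝ),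
          ((x:ℂ) - (y:ℂ) * Complex.I) ∈ {z : ℂ | z.im < 0} := by
        filter_upwards [self_mem_nhdsWithin] with y (hy : (0:ℝ) < y)
        simp [hy]
      have hin : Tendsto (fun y : ℝ => (x:ℂ) - (y:ℂ) * Complex.I) (𝓝[>] (0:ℝ))
          (𝓝[{z : ℂ | z.im < 0}] (x:ℂ)) :=
        tendsto_nhdsWithin_of_tendsto_nhds_of_eventually_within _ hbase hmem
      have hlog := (Complex.tendsto_log_nhdsWithin_im_neg_of_re_neg_of_im_zero
        (by simpa using hneg) (by simp)).comp hin
      convert hlog using 2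
      · rfl
      rw [Set.indicator_of_mem (by exact hneg : x ∈ Iio (0:ℝ))]
      simp [Complex.norm_real, sub_eq_add_neg]
    · have hlog := (continuousAt_clog (Or.inl (by simpa using hpos))).tendsto.comp hbase
      convert hlog using 2
      · rfl
      rw [Set.indicator_of_notMem (by simpa using hpos.le : x ∉ Iio (0:ℝ)), sub_zero,
        abs_of_pos hpos, Complex.ofReal_log hpos.le]

lemma split_integral {φ : ℝ → ℂ} (hφ : Continuous φ) (hc : HasCompactSupport φ) (σ : ℂ) :
    ∫ x : ℝ, ((Real.log (|x|) : ℂ) + Set.indicator (Iio 0) (fun _ => σ) x) * φ x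
      = (∫ x : ℝ, (Real.log (|x|) : ℂ) * φ x) + σ * ∫ x in Iio (0:ℝ), φ x := by
  have i1 : Integrable (fun x : ℝ => (Real.log (|x|) : ℂ) * φ x) := by
    have h := locallyIntegrable_log_abs.integrable_smul_right_of_hasCompactSupport hφ hc
    refine h.congr ?_
    filter_upwards with x
    rw [Complex.real_smul]
  have i2 : Integrable (fun x : ℝ => Set.indicator (Iio (0:ℝ)) (fun x => σ * φ x) x) :=
    ((hφ.integrable_of_hasCompactSupport hc).const_mul σ).indicator measurableSet_Iio
  have e : (fun x : ℝ => ((Real.log (|x|) : ℂ) + Set.indicator (Iio 0) (fun _ => σ) x) * φ x)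
      = fun x => (Real.log (|x|) : ℂ) * φ x
          + Set.indicator (Iio (0:ℝ)) (fun x => σ * φ x) x := by
    funext x
    by_cases h : x ∈ Iio (0:ℝ)
    · rw [Set.indicator_of_mem h, Set.indicator_of_mem h]; ring
    · rw [Set.indicator_of_notMem h, Set.indicator_of_notMem h]; ring
  rw [e, integral_add i1 i2, integral_indicator measurableSet_Iio,
    MeasureTheory.integral_const_mul]

end Limit

/-- The pairing `⟨x^{−p−1}, ψ⟩` for the distribution `x^{−p−1} := ((−1)^p/p!) ∂^{p+1} ln|x|`,
acting on complex-valued test functions: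
`⟨x^{−p−1}, ψ⟩ = (−1/p!) ∫ ln|x| · ψ^{(p+1)}(x) dx`. -/
def xNegIntC (p : ℕ) (ψ : ℝ → ℂ) : ℂ :=
  ((-1 : ℂ) / (p.factorial : ℂ)) * ∫ x : ℝ, (Real.log |x| : ℂ) * iteratedDeriv (p + 1) ψ x

/-- Sokhotski–Plemelj type formula: for every `p ∈ ℕ`,
`(x ± i0)^{−p−1} := lim_{y→0⁺} (x ± iy)^{−p−1} = x^{−p−1} ∓ ((−1)^p iπ/p!) δ^{(p)}`
in `D'(ℝ)`, i.e. tested against every test function `ψ`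
(recall `⟨δ^{(p)}, ψ⟩ = (−1)^p ψ^{(p)}(0)`). -/
theorem boundary_value_formula (p : ℕ) (ψ : ℝ → ℂ)
    (hψ : ContDiff ℝ (⊤ : ℕ∞) ψ) (hψc : HasCompactSupport ψ) :
    Tendsto (fun y : ℝ => ∫ x : ℝ, ((x : ℂ) + (y : ℂ) * Complex.I) ^ (-(p : ℤ) - 1) * ψ x)
      (𝓝[>] (0:ℝ))
      (𝓝 (xNegIntC p ψ -
        ((-1 : ℂ)^p * (Real.pi : ℂ) * Complex.I / (p.factorial : ℂ)) *
          ((-1 : ℂ)^p * iteratedDeriv p ψ 0))) ∧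
    Tendsto (fun y : ℝ => ∫ x : ℝ, ((x : ℂ) - (y : ℂ) * Complex.I) ^ (-(p : ℤ) - 1) * ψ x)
      (𝓝[>] (0:ℝ))
      (𝓝 (xNegIntC p ψ +
        ((-1 : ℂ)^p * (Real.pi : ℂ) * Complex.I / (p.factorial : ℂ)) *
          ((-1 : ℂ)^p * iteratedDeriv p ψ 0))) := by
  have hpsiInf : ContDiff ℝ (⊤:ℕ∞) ψ := hψ.of_le (by simp)
  set φ := iteratedDeriv (p+1) ψ with hφdef
  set d := iteratedDeriv p ψ 0 with hddef
  have hφcont : Continuous φ := (cd_iteratedDeriv hpsiInf (p+1)).continuous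
  have hφcs : HasCompactSupport φ := hcs_iteratedDeriv hψc (p+1)
  have h1 : ((-1:ℂ))^p * (-1)^p = 1 := by rw [← mul_pow]; norm_num
  have hD : ∫ x in Iio (0:ℝ), φ x = d := by
    rw [← integral_Iic_eq_integral_Iio]
    have hder : φ = deriv (iteratedDeriv p ψ) := iteratedDeriv_succ
    rw [hder]
    exact HasCompactSupport.integral_Iic_deriv_eq
      ((cd_iteratedDeriv hpsiInf p).of_le (by exact_mod_cast le_top))
      (hcs_iteratedDeriv hψc p) 0
  have hxneg : xNegIntC p ψ
      = ((-1 : ℂ) / (p.factorial : ℂ)) * ∫ x : ℝ, (Real.log (|x|) : ℂ) * φ x := rfl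
  constructor
  · have heq : ∀ᶠ y : ℝ in 𝓝[>] (0:ℝ),
        ((-1 : ℂ) / (p.factorial : ℂ))
            * (∫ x : ℝ, Complex.log ((x:ℂ) + (y:ℂ) * Complex.I) * φ x)
          = ∫ x : ℝ, ((x : ℂ) + (y : ℂ) * Complex.I) ^ (-(p : ℤ) - 1) * ψ x := by
      filter_upwards [self_mem_nhdsWithin] with y (hy : (0:ℝ) < y)
      have hcim : ((y:ℂ) * Complex.I).im ≠ 0 := by simpa using hy.ne'
      exact (ibp_aux hcim p ψ hpsiInf hψc).symm
    refine Tendsto.congr' heq ?_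
    have hT := (limit_plus hφcont hφcs).const_mul ((-1 : ℂ) / (p.factorial : ℂ))
    have hval : ((-1 : ℂ) / (p.factorial : ℂ)) * ∫ x : ℝ, ((Real.log (|x|) : ℂ) +
          Set.indicator (Iio 0) (fun _ => (Real.pi : ℂ) * Complex.I) x) * φ x
        = xNegIntC p ψ -
          ((-1 : ℂ)^p * (Real.pi : ℂ) * Complex.I / (p.factorial : ℂ)) * ((-1 : ℂ)^p * d) := by
      rw [split_integral hφcont hφcs ((Real.pi:ℂ) * Complex.I), hD, hxneg]
      have : ((-1:ℂ)^p * (Real.pi : ℂ) * Complex.I / (p.factorial : ℂ)) * ((-1 : ℂ)^p * d)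
          = ((-1:ℂ)^p * (-1:ℂ)^p) * ((Real.pi : ℂ) * Complex.I / (p.factorial : ℂ) * d) := by
        ring
      rw [this, h1, one_mul]
      ring
    rw [← hval]
    simpa using hT
  · have heq : ∀ᶠ y : ℝ in 𝓝[>] (0:ℝ),
        ((-1 : ℂ) / (p.factorial : ℂ))
            * (∫ x : ℝ, Complex.log ((x:ℂ) - (y:ℂ) * Complex.I) * φ x)
          = ∫ x : ℝ, ((x : ℂ) - (y : ℂ) * Complex.I) ^ (-(p : ℤ) - 1) * ψ x := by
      filter_upwards [self_mem_nhdsWithin] with y (hy : (0:ℝ) < y)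
      have hcim : (-((y:ℂ) * Complex.I)).im ≠ 0 := by simpa using hy.ne'
      have := (ibp_aux hcim p ψ hpsiInf hψc).symm
      simpa only [← sub_eq_add_neg] using this
    refine Tendsto.congr' heq ?_
    have hT := (limit_minus hφcont hφcs).const_mul ((-1 : ℂ) / (p.factorial : ℂ))
    have hrw : (fun x : ℝ => ((Real.log (|x|) : ℂ) -
          Set.indicator (Iio 0) (fun _ => (Real.pi : ℂ) * Complex.I) x) * φ x)
        = fun x : ℝ => ((Real.log (|x|) : ℂ) +
          Set.indicator (Iio 0) (fun _ => -((Real.pi : ℂ) * Complex.I)) x) * φ x := by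
      funext x
      by_cases h : x ∈ Iio (0:ℝ)
      · rw [Set.indicator_of_mem h, Set.indicator_of_mem h]; ring
      · rw [Set.indicator_of_notMem h, Set.indicator_of_notMem h]; ring
    have hval : ((-1 : ℂ) / (p.factorial : ℂ)) * ∫ x : ℝ, ((Real.log (|x|) : ℂ) -
          Set.indicator (Iio 0) (fun _ => (Real.pi : ℂ) * Complex.I) x) * φ x
        = xNegIntC p ψ +
          ((-1 : ℂ)^p * (Real.pi : ℂ) * Complex.I / (p.factorial : ℂ)) * ((-1 : ℂ)^p * d) := by
      rw [hrw, split_integral hφcont hφcs (-((Real.pi:ℂ) * Complex.I)), hD, hxneg]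
      have : ((-1:ℂ)^p * (Real.pi : ℂ) * Complex.I / (p.factorial : ℂ)) * ((-1 : ℂ)^p * d)
          = ((-1:ℂ)^p * (-1:ℂ)^p) * ((Real.pi : ℂ) * Complex.I / (p.factorial : ℂ) * d) := by
        ring
      rw [this, h1, one_mul]
      ring
    rw [← hval]
    simpa using hT
end
end
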